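/- arXiv:0908.2585 — 2 statements merged into one kernel-verified Lean document; each statement's English description precedes it below -/
import Mathlib

section
/- For every positive integer n, sum over k from 0 to n-1 of (-1)^k binomial(n,k) phi_k(x) equals sum over k from 1 to n of (-1)^(k-1) binomial(n,k) phi_k'(x), where phi_n is the exponential polynomial and phi_n' its derivative. -/
/-!
Comparing coefficients, the recurrence of `S` turns into `φₙ' = ∑_{k<n} C(n,k) φₖ`. The theorem
is then binomial inversion: because `∑ₖ (-1)ᵏ C(n,k) C(k,j) = (-1)ⁿ [j = n]`, the alternating
binomial transform of `gₖ = ∑_{j<k} C(k,j) fⱼ` is `-∑_{k<n} (-1)ᵏ C(n,k) fₖ`, for any sequence `f`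
in an abelian group.
-/

open Finset Polynomial

/-- Stirling numbers of the second kind. -/
def S : ℕ → ℕ → ℕ
  | 0, 0 => 1
  | 0, _ + 1 => 0
  | _ + 1, 0 => 0
  | n + 1, k + 1 => (k + 1) * S n (k + 1) + S n k

/-- Exponential (Bell) polynomials. -/
noncomputable def phi (n : ℕ) : Polynomial ℤ :=
  ∑ k ∈ range (n + 1), Polynomial.C (S n k : ℤ) * Polynomial.X ^ k

theorem S_succ_zero (n : ℕ) : S (n + 1) 0 = 0 := rfl

theorem S_succ_succ (n k : ℕ) : S (n + 1) (k + 1) = (k + 1) * S n (k + 1) + S n k := rfl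

theorem S_eq_zero_of_lt : ∀ {n k : ℕ}, n < k → S n k = 0
  | 0, _ + 1, _ => rfl
  | n + 1, k + 1, h => by
    rw [S_succ_succ, S_eq_zero_of_lt (by omega : n < k + 1), S_eq_zero_of_lt (by omega : n < k),
      mul_zero]
  | _ + 1, 0, h => absurd h (by omega)

theorem sum_range_choose_mul_S (n j : ℕ) :
    ∑ k ∈ range (n + 1), n.choose k * S k j = S (n + 1) (j + 1) := by
  induction n generalizing j with
  | zero => cases j <;> rfl
  | succ n ih =>
    have pascal : ∑ k ∈ range (n + 2), (n + 1).choose k * S k j =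
        ∑ k ∈ range (n + 1), n.choose k * S k j +
          ∑ k ∈ range (n + 1), n.choose k * S (k + 1) j := by
      simpa only [smul_eq_mul] using sum_choose_succ_nsmul (fun k _ ↦ S k j) n
    rw [pascal, ih j]
    cases j with
    | zero => simp [S_succ_zero, S_succ_succ]
    | succ j =>
      simp only [S_succ_succ _ j, mul_add, sum_add_distrib, mul_left_comm _ (j + 1), ← mul_sum]
      rw [ih (j + 1), ih j, S_succ_succ (n + 1) (j + 1)]
      ring

theorem coeff_phi (n j : ℕ) : (phi n).coeff j = S n j := by
  rw [phi, finsetSum_coeff]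
  simp only [coeff_C_mul_X_pow, sum_ite_eq, mem_range]
  split_ifs with h
  · rfl
  · rw [S_eq_zero_of_lt (by omega), Nat.cast_zero]

theorem derivative_phi (n : ℕ) : derivative (phi n) = ∑ k ∈ range n, n.choose k • phi k := by
  ext j
  have h := sum_range_choose_mul_S n j
  rw [sum_range_succ, Nat.choose_self, one_mul, S_succ_succ] at h
  have key : S n (j + 1) * (j + 1) = ∑ k ∈ range n, n.choose k * S k j := by linarith
  simp only [coeff_derivative, finsetSum_coeff, nsmul_eq_mul, ← C_eq_natCast, coeff_C_mul,
    coeff_phi]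
  exact_mod_cast key

/-- Compare coefficients of `X ^ j` in `(1 - (X + 1)) ^ n = (-X) ^ n`. -/
theorem alternating_sum_range_choose_mul_choose (n j : ℕ) :
    ∑ k ∈ range (n + 1), (-1 : ℤ) ^ k * n.choose k * k.choose j =
      if j = n then (-1) ^ n else 0 := by
  have h : ∑ k ∈ range (n + 1), ((-1 : ℤ) ^ k * n.choose k) • (X + 1 : ℤ[X]) ^ k =
      (-1 : ℤ) ^ n • X ^ n := by
    have := (add_pow (-(X + 1) : ℤ[X]) 1 n).symm
    rw [show -(X + 1) + 1 = -(X : ℤ[X]) by ring, neg_pow] at this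
    rw [zsmul_eq_mul, Int.cast_pow, Int.cast_neg, Int.cast_one, ← this]
    refine sum_congr rfl fun k _ ↦ ?_
    rw [mul_smul, zsmul_eq_mul, zsmul_eq_mul, neg_pow (X + 1 : ℤ[X])]
    push_cast
    ring
  have := congrArg (coeff · j) h
  simp only [finsetSum_coeff, coeff_smul, coeff_X_add_one_pow, coeff_X_pow, smul_eq_mul] at this
  simpa using this

section BinomialInversion

variable {G : Type*} [AddCommGroup G]

theorem sum_alternating_choose_smul_sum_choose_smul (f : ℕ → G) (n : ℕ) :
    ∑ k ∈ range (n + 1), ((-1 : ℤ) ^ k * n.choose k) • ∑ j ∈ range (k + 1), k.choose j • f j =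
      (-1 : ℤ) ^ n • f n := by
  have extend : ∀ k ∈ range (n + 1),
      ∑ j ∈ range (k + 1), k.choose j • f j = ∑ j ∈ range (n + 1), k.choose j • f j := by
    intro k hk
    refine sum_subset (range_subset_range.2 (by simpa using hk)) fun j _ hj ↦ ?_
    rw [Nat.choose_eq_zero_of_lt (by simpa using hj), zero_smul]
  calc _ = ∑ k ∈ range (n + 1), ∑ j ∈ range (n + 1),
        ((-1 : ℤ) ^ k * n.choose k * k.choose j) • f j := by
        refine sum_congr rfl fun k hk ↦ ?_
        simp_rw [extend k hk, smul_sum, mul_smul, natCast_zsmul]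
    _ = ∑ j ∈ range (n + 1),
        (∑ k ∈ range (n + 1), (-1 : ℤ) ^ k * n.choose k * k.choose j) • f j := by
        rw [sum_comm]
        simp_rw [sum_smul]
    _ = _ := by simp [alternating_sum_range_choose_mul_choose, ite_smul]

theorem sum_Icc_alternating_choose_smul_sum_range_choose_smul (f : ℕ → G) (n : ℕ) :
    ∑ k ∈ Icc 1 n, ((-1 : ℤ) ^ (k - 1) * n.choose k) • ∑ j ∈ range k, k.choose j • f j =
      ∑ k ∈ range n, ((-1 : ℤ) ^ k * n.choose k) • f k := by
  set g : ℕ → G := fun k ↦ ∑ j ∈ range k, k.choose j • f j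
  have hg : ∀ k, g k = ∑ j ∈ range (k + 1), k.choose j • f j - f k := by
    simp [g, sum_range_succ]
  have shift : ∑ k ∈ Icc 1 n, ((-1 : ℤ) ^ (k - 1) * n.choose k) • g k =
      -∑ k ∈ range (n + 1), ((-1 : ℤ) ^ k * n.choose k) • g k := by
    rw [range_eq_Ico, sum_eq_sum_Ico_succ_bot n.succ_pos, show g 0 = 0 from sum_range_zero _,
      smul_zero, zero_add, zero_add, Nat.succ_eq_add_one, Ico_add_one_right_eq_Icc,
      ← sum_neg_distrib]
    refine sum_congr rfl fun k hk ↦ ?_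
    obtain ⟨k, rfl⟩ := Nat.exists_eq_add_of_le' (mem_Icc.1 hk).1
    rw [Nat.add_sub_cancel, ← neg_smul]
    congr 1
    ring
  rw [shift]
  simp_rw [hg, smul_sub, sum_sub_distrib, sum_alternating_choose_smul_sum_choose_smul,
    sum_range_succ, Nat.choose_self]
  simp

end BinomialInversion

theorem stmt7_general (n : ℕ) :
    ∑ k ∈ range n, Polynomial.C ((-1 : ℤ) ^ k * n.choose k) * phi k =
      ∑ k ∈ Icc 1 n, Polynomial.C ((-1 : ℤ) ^ (k - 1) * n.choose k) *
        Polynomial.derivative (phi k) := by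
  simp only [C_mul', derivative_phi]
  exact (sum_Icc_alternating_choose_smul_sum_range_choose_smul phi n).symm

theorem stmt7 (n : ℕ) (hn : 0 < n) :
    ∑ k ∈ range n, Polynomial.C ((-1 : ℤ) ^ k * n.choose k) * phi k =
      ∑ k ∈ Icc 1 n, Polynomial.C ((-1 : ℤ) ^ (k - 1) * n.choose k) *
        Polynomial.derivative (phi k) :=
  stmt7_general n
end

section
/- For every nonnegative integer n, F_{n+1}(x) = x * sum over k from 0 to n of binomial(n,k) * (F_k(x) + x * F_k'(x)), where F_n is the geometric polynomial and F_k' its derivative with respect to x. -/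
/-!
Comparing coefficients of `x^(m+1)`, the identity reduces to the binomial recurrence
`S(n+1, m+1) = ∑ₖ C(n,k) S(k,m)` for Stirling numbers of the second kind, since
`F_k + x F_k'` has coefficient `S(k,m) (m+1)!` at `x^m`. The recurrence follows by induction
on `n` from Pascal's rule and the defining recurrence of `S`.
-/

open Finset Polynomial

/-- Geometric (Fubini) polynomials. -/
noncomputable def F (n : ℕ) : Polynomial ℤ :=
  ∑ k ∈ range (n + 1), Polynomial.C ((S n k : ℤ) * (Nat.factorial k : ℤ)) * Polynomial.X ^ k

theorem Nat.stirlingSecond_succ_succ_eq_sum_choose_mul (n m : ℕ) :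
    stirlingSecond (n + 1) (m + 1) = ∑ k ∈ range (n + 1), n.choose k * stirlingSecond k m := by
  induction n generalizing m with
  | zero => cases m <;> rfl
  | succ n ih =>
    have shift : ∑ k ∈ range (n + 1), n.choose k * stirlingSecond (k + 1) m =
        m * stirlingSecond (n + 1) (m + 1) + stirlingSecond (n + 1) m := by
      cases m with
      | zero => simp
      | succ m =>
        simp only [stirlingSecond_succ_succ, mul_add, sum_add_distrib, mul_left_comm _ (m + 1),
          ← mul_sum, ← ih]
    have pascal := sum_choose_succ_mul (fun k _ => stirlingSecond k m) n
    simp only [Nat.cast_id] at pascal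
    rw [pascal, shift, ← ih, stirlingSecond_succ_succ (n + 1)]
    ring

theorem S_eq_stirlingSecond : S = Nat.stirlingSecond := by
  funext n k
  induction n generalizing k with
  | zero => cases k <;> rfl
  | succ n ih => cases k <;> simp [S, Nat.stirlingSecond_succ_succ, ih]

theorem Polynomial.coeff_X_mul_derivative {R : Type*} [Semiring R] (p : R[X]) (n : ℕ) :
    (X * derivative p).coeff n = p.coeff n * n := by
  cases n with
  | zero => simp
  | succ n => rw [coeff_X_mul, coeff_derivative, Nat.cast_succ]

theorem coeff_F (n m : ℕ) : (F n).coeff m = ((Nat.stirlingSecond n m * m.factorial : ℕ) : ℤ) := by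
  simp only [F, finsetSum_coeff, coeff_C_mul_X_pow, sum_ite_eq, mem_range, S_eq_stirlingSecond]
  split_ifs with h
  · rfl
  · simp [Nat.stirlingSecond_eq_zero_of_lt (not_lt.mp h)]

theorem coeff_F_add_X_mul_derivative (k m : ℕ) :
    (F k + X * derivative (F k)).coeff m =
      ((Nat.stirlingSecond k m * (m + 1).factorial : ℕ) : ℤ) := by
  rw [coeff_add, coeff_X_mul_derivative, coeff_F, Nat.factorial_succ]
  push_cast
  ring

theorem stmt13 (n : ℕ) :
    F (n + 1) =
      Polynomial.X * ∑ k ∈ range (n + 1), Polynomial.C (n.choose k : ℤ) *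
        (F k + Polynomial.X * Polynomial.derivative (F k)) := by
  ext (_ | m)
  · simp [coeff_F]
  · simp only [coeff_X_mul, finsetSum_coeff, coeff_C_mul, coeff_F_add_X_mul_derivative, coeff_F,
      Nat.stirlingSecond_succ_succ_eq_sum_choose_mul]
    push_cast
    rw [sum_mul]
    exact sum_congr rfl fun k _ => by ring
end
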